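/- Let α₁ ∈ (1,2), α₂ ∈ (0,2), set H₂ := 1 − (α₂/2)·(1 − 1/α₁), and let Λ be a probability measure on Δ₁. There exists a constant C such that for all positive integers n₁, n₂ and all θ = (θ₁,θ₂) with 0 < |θ_k| ≤ n_k π for k = 1,2, one has (with n* := n₂^{α₂}): r̂_n(θ) := (1/n*) · ∫_{Δ₁} ∫_0^∞ [ ∏_{k=1,2} g( (n* r w_k)^{−1/α_k}, θ_k/n_k ) ] · 1{ n* r w_k ≥ 1 for k = 1,2 } r^{−2} dr Λ(dw) ≤ C·( n₂^{2H₂−1} · |θ₂|^{1−2H₂} + 1 ). -/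

import Mathlib

open MeasureTheory Real
open scoped ENNReal

set_option maxHeartbeats 1000000

/-- The open simplex `Δ₁ = {w ∈ (0,1)² : w₁ + w₂ = 1}`. -/
def Delta1 : Set (ℝ × ℝ) :=
  {w | w.1 ∈ Set.Ioo (0:ℝ) 1 ∧ w.2 ∈ Set.Ioo (0:ℝ) 1 ∧ w.1 + w.2 = 1}

/-- `g(u,φ) = u(2-u)/(u² + 2(1-u)(1-cos φ))`. -/
noncomputable def gfun (u φ : ℝ) : ℝ :=
  u * (2 - u) / (u ^ 2 + 2 * (1 - u) * (1 - Real.cos φ))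

/-- `h_n(r,w,θ)` with rescaling factor `nstar`. -/
noncomputable def hfun (α₁ α₂ nstar : ℝ) (n₁ n₂ : ℕ) (θ : ℝ × ℝ) (r : ℝ) (w : ℝ × ℝ) : ℝ :=
  if 1 ≤ nstar * r * w.1 ∧ 1 ≤ nstar * r * w.2 then
    gfun ((nstar * r * w.1) ^ (-1/α₁)) (θ.1 / n₁) *
      gfun ((nstar * r * w.2) ^ (-1/α₂)) (θ.2 / n₂)
  else 0

/-- The rescaled spectral density `r̂_n(θ)` with `n* := n₂^{α₂}`. -/
noncomputable def rhat (α₁ α₂ : ℝ) (Λ : Measure (ℝ × ℝ)) (n₁ n₂ : ℕ) (θ : ℝ × ℝ) : ℝ≥0∞ :=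
  ENNReal.ofReal (((n₂ : ℝ) ^ α₂)⁻¹) *
    ∫⁻ w in Delta1,
      (∫⁻ r in Set.Ioi (0:ℝ),
        ENNReal.ofReal (hfun α₁ α₂ ((n₂ : ℝ) ^ α₂) n₁ n₂ θ r w * r ^ (-2 : ℝ))) ∂Λ

open Real in
lemma gfun_nonneg {u : ℝ} (hu0 : 0 ≤ u) (hu1 : u ≤ 1) (φ : ℝ) : 0 ≤ gfun u φ := by
  have h1 : Real.cos φ ≤ 1 := Real.cos_le_one φ
  apply div_nonneg <;> nlinarith

open Real in
lemma gfun_le_one {u : ℝ} (hu0 : 0 < u) (hu1 : u ≤ 1) (φ : ℝ) : gfun u φ ≤ 2 / u := by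
  have h1 : Real.cos φ ≤ 1 := Real.cos_le_one φ
  have hd : 0 < u ^ 2 + 2 * (1 - u) * (1 - Real.cos φ) := by nlinarith
  rw [gfun, div_le_div_iff₀ hd hu0]
  nlinarith

open Real in
lemma gfun_le_two {u φ : ℝ} (hu0 : 0 < u) (hu1 : u ≤ 1) (hφ0 : 0 < |φ|) (hφπ : |φ| ≤ π) :
    gfun u φ ≤ 12 * π ^ 2 * u / φ ^ 2 := by
  have hφne : φ ≠ 0 := by intro h; rw [h] at hφ0; simp at hφ0
  have hφ2 : 0 < φ ^ 2 := by positivity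
  have hπ : 0 < π := Real.pi_pos
  have h1 : Real.cos φ ≤ 1 := Real.cos_le_one φ
  have hd : 0 < u ^ 2 + 2 * (1 - u) * (1 - Real.cos φ) := by nlinarith
  have hc : Real.cos φ ≤ 1 - 2 / π ^ 2 * φ ^ 2 := Real.cos_le_one_sub_mul_cos_sq hφπ
  have h3 : 2 * φ ^ 2 ≤ π ^ 2 * (1 - Real.cos φ) := by
    have h2 : 2 / π ^ 2 * φ ^ 2 ≤ 1 - Real.cos φ := by linarith
    rw [div_mul_eq_mul_div, div_le_iff₀ (by positivity)] at h2
    linarith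
  rw [gfun, div_le_div_iff₀ hd hφ2]
  rcases le_or_gt u (1/2) with h | h
  · have h4 : 2 * φ ^ 2 ≤ π ^ 2 * (u ^ 2 + 2 * (1 - u) * (1 - Real.cos φ)) := by nlinarith
    nlinarith [mul_le_mul_of_nonneg_left h4 hu0.le, mul_nonneg hu0.le hφ2.le]
  · have hφπ2 : φ ^ 2 ≤ π ^ 2 := by
      have := abs_nonneg φ
      nlinarith [sq_abs φ]
    have hD2 : u ^ 2 ≤ u ^ 2 + 2 * (1 - u) * (1 - Real.cos φ) := by nlinarith
    nlinarith [mul_le_mul_of_nonneg_left hφπ2 hu0.le,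
      mul_le_mul_of_nonneg_left hD2 (mul_nonneg (sq_nonneg π) hu0.le),
      mul_nonneg hu0.le hφ2.le]

open Real in
lemma gfun_le_A {α t : ℝ} (hα : 0 < α) (ht : 1 ≤ t) (φ : ℝ) :
    gfun (t ^ (-1/α)) φ ≤ 2 * t ^ (1/α) := by
  have ht0 : (0:ℝ) < t := lt_of_lt_of_le one_pos ht
  have hu0 : 0 < t ^ (-1/α) := Real.rpow_pos_of_pos ht0 _
  have hexp : (-1/α : ℝ) ≤ 0 := div_nonpos_of_nonpos_of_nonneg (by norm_num) hα.le
  have hu1 : t ^ (-1/α) ≤ 1 := Real.rpow_le_one_of_one_le_of_nonpos ht hexp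
  have hinv : (t ^ (-1/α))⁻¹ = t ^ (1/α) := by
    rw [show (-1/α : ℝ) = -(1/α) by ring, Real.rpow_neg ht0.le, inv_inv]
  calc gfun (t ^ (-1/α)) φ ≤ 2 / t ^ (-1/α) := gfun_le_one hu0 hu1 φ
    _ = 2 * t ^ (1/α) := by rw [div_eq_mul_inv, hinv]

open Real in
lemma gfun_nonneg' {α t : ℝ} (hα : 0 < α) (ht : 1 ≤ t) (φ : ℝ) :
    0 ≤ gfun (t ^ (-1/α)) φ := by
  have ht0 : (0:ℝ) < t := lt_of_lt_of_le one_pos ht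
  have hexp : (-1/α : ℝ) ≤ 0 := div_nonpos_of_nonpos_of_nonneg (by norm_num) hα.le
  exact gfun_nonneg (Real.rpow_nonneg ht0.le _)
    (Real.rpow_le_one_of_one_le_of_nonpos ht hexp) φ

open Real in
lemma gfun_le_B {α t φ : ℝ} (hα : 0 < α) (ht : 1 ≤ t) (hφ0 : 0 < |φ|) (hφπ : |φ| ≤ π) :
    gfun (t ^ (-1/α)) φ ≤ 12 * π ^ 2 * t ^ (-1/α) / φ ^ 2 := by
  have ht0 : (0:ℝ) < t := lt_of_lt_of_le one_pos ht
  have hu0 : 0 < t ^ (-1/α) := Real.rpow_pos_of_pos ht0 _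
  have hexp : (-1/α : ℝ) ≤ 0 := div_nonpos_of_nonpos_of_nonneg (by norm_num) hα.le
  have hu1 : t ^ (-1/α) ≤ 1 := Real.rpow_le_one_of_one_le_of_nonpos ht hexp
  exact gfun_le_two hu0 hu1 hφ0 hφπ


/-- for `α₁ ∈ (1,2)`, `α₂ ∈ (0,2)` and `H₂ := 1 - (α₂/2)(1 - 1/α₁)`,
there is a constant `C` such that for all positive `n₁, n₂` and all `θ` with
`0 < |θ_k| ≤ n_k π`, `r̂_n(θ) ≤ C (n₂^{2H₂-1} |θ₂|^{1-2H₂} + 1)`. -/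
theorem stmt_18 (α₁ α₂ H₂ : ℝ) (hα₁ : α₁ ∈ Set.Ioo (1:ℝ) 2) (hα₂ : α₂ ∈ Set.Ioo (0:ℝ) 2)
    (hH₂ : H₂ = 1 - (α₂ / 2) * (1 - 1 / α₁))
    (Λ : Measure (ℝ × ℝ)) [IsProbabilityMeasure Λ] (hΛ : Λ Delta1ᶜ = 0) :
    ∃ C : ℝ, 0 < C ∧
      ∀ n₁ n₂ : ℕ, 0 < n₁ → 0 < n₂ →
        ∀ θ₁ θ₂ : ℝ, 0 < |θ₁| → |θ₁| ≤ (n₁ : ℝ) * Real.pi →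
          0 < |θ₂| → |θ₂| ≤ (n₂ : ℝ) * Real.pi →
          rhat α₁ α₂ Λ n₁ n₂ (θ₁, θ₂)
            ≤ ENNReal.ofReal (C * ((n₂ : ℝ) ^ (2 * H₂ - 1) * |θ₂| ^ (1 - 2 * H₂) + 1)) := by
  obtain ⟨h11, h12⟩ := hα₁
  obtain ⟨h21, h22⟩ := hα₂
  have hπ : 0 < π := Real.pi_pos
  have hα₁0 : (0:ℝ) < α₁ := by linarith
  have hα₂ne : α₂ ≠ 0 := ne_of_gt h21
  have hα₁ne : α₁ ≠ 0 := ne_of_gt hα₁0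
  have hβ0 : 0 < 1/α₁ := by positivity
  have hβ1 : 1/α₁ < 1 := by rw [div_lt_one hα₁0]; linarith
  have hβh : 1/2 < 1/α₁ := by rw [div_lt_div_iff₀ (by norm_num) hα₁0]; linarith
  have hγ0 : 0 < 1/α₂ := by positivity
  have hγh : 1/2 < 1/α₂ := by rw [div_lt_div_iff₀ (by norm_num) h21]; linarith
  set s1 : ℝ := 1/α₁ + 1/α₂ - 1 with hs1def
  set s2 : ℝ := 1 + 1/α₂ - 1/α₁ with hs2def
  have hs1 : 0 < s1 := by rw [hs1def]; linarith
  have hs2 : 0 < s2 := by rw [hs2def]; linarith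
  set K₀ : ℝ := 1/s1 + 1/s2 with hK₀def
  have hK₀ : 0 < K₀ := by positivity
  refine ⟨24*π^2*K₀ + 1, by positivity, ?_⟩
  intro n₁ n₂ hn₁ hn₂ θ₁ θ₂ hθ₁ hθ₁' hθ₂ hθ₂'
  have hn₂R : (0:ℝ) < n₂ := by exact_mod_cast hn₂
  unfold rhat
  set N : ℝ := (n₂:ℝ)^α₂ with hNdef
  have hN : 0 < N := Real.rpow_pos_of_pos hn₂R _
  set b : ℝ := |θ₂|/n₂ with hbdef
  have hb : 0 < b := div_pos hθ₂ hn₂R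
  have hbπ : b ≤ π := by rw [hbdef, div_le_iff₀ hn₂R]; linarith
  set X : ℝ := b^(-(2*H₂-1)) with hXdef
  have hX0 : 0 ≤ X := Real.rpow_nonneg hb.le _
  have hδs1 : -(2*H₂-1) = -α₂ * s1 := by rw [hH₂, hs1def]; field_simp; ring
  have hδs2 : -(2*H₂-1) = α₂ * s2 - 2 := by rw [hH₂, hs2def]; field_simp; ring
  have h4le : (4:ℝ) ≤ 24*π^2 := by nlinarith [Real.pi_gt_three]
  have h12le : (0:ℝ) ≤ 12*π^2 := by positivity
  -- key inner bound
  have key : ∀ w ∈ Delta1,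
      (∫⁻ r in Set.Ioi (0:ℝ),
        ENNReal.ofReal (hfun α₁ α₂ N n₁ n₂ (θ₁,θ₂) r w * r ^ (-2:ℝ)))
      ≤ ENNReal.ofReal (24*π^2*K₀*N*(1+X)) := by
    rintro ⟨w₁, w₂⟩ ⟨⟨hw10, hw11⟩, ⟨hw20, hw21⟩, -⟩
    have hNw : 0 < N*w₂ := mul_pos hN hw20
    set a : ℝ := (N*w₂)⁻¹ with hadef
    have ha : 0 < a := by positivity
    set m : ℝ := max 1 (b^(-α₂)) with hmdef
    have hm1 : (1:ℝ) ≤ m := le_max_left _ _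
    have hm0 : (0:ℝ) < m := lt_of_lt_of_le one_pos hm1
    set R : ℝ := a*m with hRdef
    have hR0 : 0 < R := mul_pos ha hm0
    have haR : a ≤ R := le_mul_of_one_le_right ha.le hm1
    have ha2R : a/2 ≤ R := by linarith
    set C₁ : ℝ := 24*π^2*N^(1/α₁)*(N*w₂)^(1/α₂) with hC₁def
    set C₂ : ℝ := 24*π^2*N^(1/α₁)*(N*w₂)^(-(1/α₂))/b^2 with hC₂def
    have hC₁0 : 0 ≤ C₁ := by rw [hC₁def]; positivity
    have hC₂0 : 0 ≤ C₂ := by rw [hC₂def]; positivity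
    -- pointwise bound
    have point : ∀ r ∈ Set.Ioi (0:ℝ),
        ENNReal.ofReal (hfun α₁ α₂ N n₁ n₂ (θ₁,θ₂) r (w₁,w₂) * r ^ (-2:ℝ)) ≤
          (Set.Ioc (a/2) R).indicator (fun r => ENNReal.ofReal (C₁ * r^(1/α₁+1/α₂-2))) r
          + (Set.Ioi R).indicator (fun r => ENNReal.ofReal (C₂ * r^(1/α₁-1/α₂-2))) r := by
      intro r hr
      have hr0 : (0:ℝ) < r := hr
      simp only [hfun]
      split_ifs with hind
      · obtain ⟨hind1, hind2⟩ := hind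
        have hNr : 0 < N*r := mul_pos hN hr0
        have hra : a ≤ r := by
          rw [hadef, ← one_div]
          rw [div_le_iff₀ hNw]
          calc (1:ℝ) ≤ N*r*w₂ := hind2
            _ = r*(N*w₂) := by ring
        have hrm2 : 0 ≤ r^(-2:ℝ) := Real.rpow_nonneg hr0.le _
        have hg1 : gfun ((N*r*w₁)^(-1/α₁)) (θ₁/(n₁:ℝ)) ≤ 2*(N*r)^(1/α₁) := by
          refine le_trans (gfun_le_A hα₁0 hind1 _) ?_
          have h := Real.rpow_le_rpow (by positivity)
            (mul_le_of_le_one_right hNr.le hw11.le) hβ0.le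
          linarith
        have hg1nn : 0 ≤ gfun ((N*r*w₁)^(-1/α₁)) (θ₁/(n₁:ℝ)) := gfun_nonneg' hα₁0 hind1 _
        have hg2nn : 0 ≤ gfun ((N*r*w₂)^(-1/α₂)) (θ₂/(n₂:ℝ)) := gfun_nonneg' h21 hind2 _
        rcases le_or_gt r R with hrR | hrR
        · have hmem : r ∈ Set.Ioc (a/2) R := ⟨by linarith, hrR⟩
          rw [Set.indicator_of_mem hmem]
          refine le_trans (ENNReal.ofReal_le_ofReal ?_) le_self_add
          have hg2 : gfun ((N*r*w₂)^(-1/α₂)) (θ₂/(n₂:ℝ)) ≤ 2*(N*r*w₂)^(1/α₂) :=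
            gfun_le_A h21 hind2 _
          calc gfun ((N*r*w₁)^(-1/α₁)) (θ₁/(n₁:ℝ)) * gfun ((N*r*w₂)^(-1/α₂)) (θ₂/(n₂:ℝ)) * r^(-2:ℝ)
              ≤ (2*(N*r)^(1/α₁)) * (2*(N*r*w₂)^(1/α₂)) * r^(-2:ℝ) := by
                apply mul_le_mul_of_nonneg_right _ hrm2
                exact mul_le_mul hg1 hg2 hg2nn (by positivity)
            _ = 4 * (N^(1/α₁)*(N*w₂)^(1/α₂)) * (r^(1/α₁) * (r^(1/α₂) * r^(-2:ℝ))) := by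
                rw [Real.mul_rpow hN.le hr0.le, show N*r*w₂ = (N*w₂)*r by ring,
                  Real.mul_rpow hNw.le hr0.le]
                ring
            _ = 4 * (N^(1/α₁)*(N*w₂)^(1/α₂)) * r^(1/α₁+1/α₂-2) := by
                rw [← Real.rpow_add hr0, ← Real.rpow_add hr0,
                  show (1/α₁ + (1/α₂ + -(2:ℝ))) = 1/α₁+1/α₂-2 by ring]
            _ ≤ C₁ * r^(1/α₁+1/α₂-2) := by
                apply mul_le_mul_of_nonneg_right _ (Real.rpow_nonneg hr0.le _)
                rw [hC₁def]
                have hx : 0 ≤ N^(1/α₁)*(N*w₂)^(1/α₂) :=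
                  mul_nonneg (Real.rpow_nonneg hN.le _) (Real.rpow_nonneg hNw.le _)
                linarith [mul_le_mul_of_nonneg_right h4le hx]
        · rw [Set.indicator_of_mem (Set.mem_Ioi.mpr hrR)]
          refine le_trans (ENNReal.ofReal_le_ofReal ?_) le_add_self
          have habs : |θ₂/(n₂:ℝ)| = b := by
            rw [abs_div, Nat.abs_cast, ← hbdef]
          have hφ0 : 0 < |θ₂/(n₂:ℝ)| := by rw [habs]; exact hb
          have hφπ : |θ₂/(n₂:ℝ)| ≤ π := by rw [habs]; exact hbπ
          have hsq : (θ₂/(n₂:ℝ))^2 = b^2 := by rw [← sq_abs, habs]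
          have hg2 : gfun ((N*r*w₂)^(-1/α₂)) (θ₂/(n₂:ℝ)) ≤ 12*π^2*(N*r*w₂)^(-1/α₂)/b^2 := by
            have := gfun_le_B h21 hind2 hφ0 hφπ
            rwa [hsq] at this
          calc gfun ((N*r*w₁)^(-1/α₁)) (θ₁/(n₁:ℝ)) * gfun ((N*r*w₂)^(-1/α₂)) (θ₂/(n₂:ℝ)) * r^(-2:ℝ)
              ≤ (2*(N*r)^(1/α₁)) * (12*π^2*(N*r*w₂)^(-1/α₂)/b^2) * r^(-2:ℝ) := by
                apply mul_le_mul_of_nonneg_right _ hrm2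
                apply mul_le_mul hg1 hg2 hg2nn (by positivity)
            _ = (24*π^2*N^(1/α₁)*(N*w₂)^(-(1/α₂))/b^2) * (r^(1/α₁) * (r^(-(1/α₂)) * r^(-2:ℝ))) := by
                rw [Real.mul_rpow hN.le hr0.le, show N*r*w₂ = (N*w₂)*r by ring,
                  show (-1/α₂ : ℝ) = -(1/α₂) by ring, Real.mul_rpow hNw.le hr0.le]
                ring
            _ = C₂ * r^(1/α₁-1/α₂-2) := by
                rw [← Real.rpow_add hr0, ← Real.rpow_add hr0,
                  show (1/α₁ + (-(1/α₂) + -(2:ℝ))) = 1/α₁-1/α₂-2 by ring]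
      · simp only [zero_mul, ENNReal.ofReal_zero]
        exact zero_le
    -- integration
    have hp1 : (-1:ℝ) < 1/α₁+1/α₂-2 := by linarith
    have hq1 : (1/α₁-1/α₂-2 : ℝ) < -1 := by linarith
    have meas1 : Measurable fun r : ℝ => ENNReal.ofReal (C₁ * r^(1/α₁+1/α₂-2)) := by fun_prop
    have meas2 : Measurable fun r : ℝ => ENNReal.ofReal (C₂ * r^(1/α₁-1/α₂-2)) := by fun_prop
    have int1 : IntegrableOn (fun r : ℝ => C₁ * r^(1/α₁+1/α₂-2)) (Set.Ioc (a/2) R) := by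
      have h := (intervalIntegral.intervalIntegrable_rpow' (a := a/2) (b := R) hp1).const_mul C₁
      exact (intervalIntegrable_iff_integrableOn_Ioc_of_le ha2R).1 h
    have int2 : IntegrableOn (fun r : ℝ => C₂ * r^(1/α₁-1/α₂-2)) (Set.Ioi R) :=
      (integrableOn_Ioi_rpow_of_lt hq1 hR0).const_mul C₂
    have nn1 : 0 ≤ᵐ[volume.restrict (Set.Ioc (a/2) R)] fun r : ℝ => C₁ * r^(1/α₁+1/α₂-2) := by
      filter_upwards [ae_restrict_mem measurableSet_Ioc] with r hr
      have hr0 : (0:ℝ) < r := lt_trans (by positivity) hr.1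
      exact mul_nonneg hC₁0 (Real.rpow_nonneg hr0.le _)
    have nn2 : 0 ≤ᵐ[volume.restrict (Set.Ioi R)] fun r : ℝ => C₂ * r^(1/α₁-1/α₂-2) := by
      filter_upwards [ae_restrict_mem measurableSet_Ioi] with r hr
      have hr0 : (0:ℝ) < r := lt_trans hR0 hr
      exact mul_nonneg hC₂0 (Real.rpow_nonneg hr0.le _)
    have conv1 : (∫⁻ r in Set.Ioc (a/2) R, ENNReal.ofReal (C₁ * r^(1/α₁+1/α₂-2)))
        = ENNReal.ofReal (∫ r in Set.Ioc (a/2) R, C₁ * r^(1/α₁+1/α₂-2)) :=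
      (ofReal_integral_eq_lintegral_ofReal int1 nn1).symm
    have conv2 : (∫⁻ r in Set.Ioi R, ENNReal.ofReal (C₂ * r^(1/α₁-1/α₂-2)))
        = ENNReal.ofReal (∫ r in Set.Ioi R, C₂ * r^(1/α₁-1/α₂-2)) :=
      (ofReal_integral_eq_lintegral_ofReal int2 nn2).symm
    have val1 : ∫ r in Set.Ioc (a/2) R, C₁ * r^(1/α₁+1/α₂-2)
        = C₁ * ((R^s1 - (a/2)^s1)/s1) := by
      rw [← intervalIntegral.integral_of_le ha2R, intervalIntegral.integral_const_mul,
        integral_rpow (Or.inl hp1),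
        show (1/α₁+1/α₂-2+1 : ℝ) = s1 by rw [hs1def]; ring]
    have val2 : ∫ r in Set.Ioi R, C₂ * r^(1/α₁-1/α₂-2) = C₂ * (R^(-s2)/s2) := by
      rw [MeasureTheory.integral_const_mul, integral_Ioi_rpow_of_lt hq1 hR0,
        show (1/α₁-1/α₂-2+1 : ℝ) = -s2 by rw [hs2def]; ring, neg_div_neg_eq]
    -- real estimates
    have hRs1 : R^s1 = ((N*w₂)^s1)⁻¹ * m^s1 := by
      rw [hRdef, hadef, Real.mul_rpow (inv_nonneg.2 hNw.le) hm0.le, Real.inv_rpow hNw.le]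
    have hRs2 : R^(-s2) = ((N*w₂)^(-s2))⁻¹ * m^(-s2) := by
      rw [hRdef, hadef, Real.mul_rpow (inv_nonneg.2 hNw.le) hm0.le, Real.inv_rpow hNw.le]
    have hw2e : w₂^(1-1/α₁) ≤ 1 := Real.rpow_le_one hw20.le hw21.le (by linarith)
    have key1' : C₁ * R^s1 ≤ 24*π^2*N*m^s1 := by
      rw [hRs1, hC₁def]
      have e1 : (N*w₂)^(1/α₂) * ((N*w₂)^s1)⁻¹ = (N*w₂)^(1-1/α₁) := by
        rw [← Real.rpow_neg hNw.le, ← Real.rpow_add hNw]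
        congr 1
        rw [hs1def]; ring
      calc 24*π^2*N^(1/α₁)*(N*w₂)^(1/α₂) * (((N*w₂)^s1)⁻¹ * m^s1)
          = 24*π^2*(N^(1/α₁)*((N*w₂)^(1/α₂) * ((N*w₂)^s1)⁻¹))*m^s1 := by ring
        _ = 24*π^2*(N^(1/α₁)*(N*w₂)^(1-1/α₁))*m^s1 := by rw [e1]
        _ = 24*π^2*(N^(1/α₁)*N^(1-1/α₁))*(m^s1*w₂^(1-1/α₁)) := by
            rw [Real.mul_rpow hN.le hw20.le]; ring
        _ = (24*π^2*N*m^s1)*w₂^(1-1/α₁) := by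
            rw [← Real.rpow_add hN, show (1/α₁+(1-1/α₁) : ℝ) = 1 by ring, Real.rpow_one]; ring
        _ ≤ (24*π^2*N*m^s1)*1 := mul_le_mul_of_nonneg_left hw2e (by positivity)
        _ = 24*π^2*N*m^s1 := mul_one _
    have key2' : C₂ * R^(-s2) ≤ 24*π^2*N*(m^(-s2)/b^2) := by
      rw [hRs2, hC₂def]
      have e1 : (N*w₂)^(-(1/α₂)) * ((N*w₂)^(-s2))⁻¹ = (N*w₂)^(1-1/α₁) := by
        rw [← Real.rpow_neg hNw.le, ← Real.rpow_add hNw]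
        congr 1
        rw [hs2def]; ring
      calc 24*π^2*N^(1/α₁)*(N*w₂)^(-(1/α₂))/b^2 * (((N*w₂)^(-s2))⁻¹ * m^(-s2))
          = 24*π^2*(N^(1/α₁)*((N*w₂)^(-(1/α₂)) * ((N*w₂)^(-s2))⁻¹))*(m^(-s2)/b^2) := by ring
        _ = 24*π^2*(N^(1/α₁)*(N*w₂)^(1-1/α₁))*(m^(-s2)/b^2) := by rw [e1]
        _ = 24*π^2*(N^(1/α₁)*N^(1-1/α₁))*((m^(-s2)/b^2)*w₂^(1-1/α₁)) := by
            rw [Real.mul_rpow hN.le hw20.le]; ring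
        _ = (24*π^2*N*(m^(-s2)/b^2))*w₂^(1-1/α₁) := by
            rw [← Real.rpow_add hN, show (1/α₁+(1-1/α₁) : ℝ) = 1 by ring, Real.rpow_one]; ring
        _ ≤ (24*π^2*N*(m^(-s2)/b^2))*1 := mul_le_mul_of_nonneg_left hw2e (by positivity)
        _ = 24*π^2*N*(m^(-s2)/b^2) := mul_one _
    have boundX : m^s1 ≤ 1 + X := by
      rcases le_or_gt b 1 with hb1 | hb1
      · have h1 : (1:ℝ) ≤ b^(-α₂) :=
          Real.one_le_rpow_of_pos_of_le_one_of_nonpos hb hb1 (by linarith)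
        have hmeq : m = b^(-α₂) := max_eq_right h1
        rw [hmeq, ← Real.rpow_mul hb.le, ← hδs1, ← hXdef]
        linarith
      · have hmeq : m = 1 :=
          max_eq_left (Real.rpow_le_one_of_one_le_of_nonpos hb1.le (by linarith))
        rw [hmeq, Real.one_rpow]
        linarith
    have boundY : m^(-s2)/b^2 ≤ 1 + X := by
      rcases le_or_gt b 1 with hb1 | hb1
      · have h1 : (1:ℝ) ≤ b^(-α₂) :=
          Real.one_le_rpow_of_pos_of_le_one_of_nonpos hb hb1 (by linarith)
        have hmeq : m = b^(-α₂) := max_eq_right h1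
        have hb2 : (b:ℝ)^2 = b^(2:ℝ) := by rw [← Real.rpow_natCast b 2]; norm_num
        rw [hmeq, ← Real.rpow_mul hb.le, hb2, ← Real.rpow_sub hb,
          show (-α₂*(-s2) - 2 : ℝ) = -(2*H₂-1) by rw [hδs2]; ring, ← hXdef]
        linarith
      · have hmeq : m = 1 :=
          max_eq_left (Real.rpow_le_one_of_one_le_of_nonpos hb1.le (by linarith))
        have hb21 : (1:ℝ) ≤ b^2 := one_le_pow₀ hb1.le
        rw [hmeq, Real.one_rpow]
        have : 1/b^2 ≤ 1 := by rw [div_le_one (by positivity)]; exact hb21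
        linarith
    have hval1 : C₁ * ((R^s1 - (a/2)^s1)/s1) ≤ 24*π^2*N*(1+X)/s1 := by
      have h1 : C₁ * (R^s1 - (a/2)^s1) ≤ 24*π^2*N*(1+X) := by
        have h3 : (0:ℝ) ≤ (a/2)^s1 := Real.rpow_nonneg (by positivity) _
        have h2 : C₁ * (R^s1 - (a/2)^s1) ≤ C₁ * R^s1 := by
          linarith [mul_nonneg hC₁0 h3]
        have h4 : 24*π^2*N*m^s1 ≤ 24*π^2*N*(1+X) :=
          mul_le_mul_of_nonneg_left boundX (by positivity)
        linarith [key1']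
      calc C₁ * ((R^s1 - (a/2)^s1)/s1) = C₁ * (R^s1 - (a/2)^s1)/s1 := by ring
        _ ≤ 24*π^2*N*(1+X)/s1 := by gcongr
    have hval2 : C₂ * (R^(-s2)/s2) ≤ 24*π^2*N*(1+X)/s2 := by
      have h1 : C₂ * R^(-s2) ≤ 24*π^2*N*(1+X) := by
        have h4 : 24*π^2*N*(m^(-s2)/b^2) ≤ 24*π^2*N*(1+X) :=
          mul_le_mul_of_nonneg_left boundY (by positivity)
        linarith [key2']
      calc C₂ * (R^(-s2)/s2) = C₂ * R^(-s2)/s2 := by ring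
        _ ≤ 24*π^2*N*(1+X)/s2 := by gcongr
    have hsum : 24*π^2*N*(1+X)/s1 + 24*π^2*N*(1+X)/s2 = 24*π^2*K₀*N*(1+X) := by
      rw [hK₀def]; field_simp
    calc (∫⁻ r in Set.Ioi (0:ℝ),
            ENNReal.ofReal (hfun α₁ α₂ N n₁ n₂ (θ₁,θ₂) r (w₁,w₂) * r ^ (-2:ℝ)))
        ≤ ∫⁻ r in Set.Ioi (0:ℝ),
            ((Set.Ioc (a/2) R).indicator (fun r => ENNReal.ofReal (C₁ * r^(1/α₁+1/α₂-2))) r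
             + (Set.Ioi R).indicator (fun r => ENNReal.ofReal (C₂ * r^(1/α₁-1/α₂-2))) r) :=
          setLIntegral_mono ((meas1.indicator measurableSet_Ioc).add
            (meas2.indicator measurableSet_Ioi)) point
      _ ≤ ∫⁻ r,
            ((Set.Ioc (a/2) R).indicator (fun r => ENNReal.ofReal (C₁ * r^(1/α₁+1/α₂-2))) r
             + (Set.Ioi R).indicator (fun r => ENNReal.ofReal (C₂ * r^(1/α₁-1/α₂-2))) r) :=
          setLIntegral_le_lintegral _ _
      _ = (∫⁻ r, (Set.Ioc (a/2) R).indicator (fun r => ENNReal.ofReal (C₁ * r^(1/α₁+1/α₂-2))) r)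
          + ∫⁻ r, (Set.Ioi R).indicator (fun r => ENNReal.ofReal (C₂ * r^(1/α₁-1/α₂-2))) r :=
          lintegral_add_left (meas1.indicator measurableSet_Ioc) _
      _ = (∫⁻ r in Set.Ioc (a/2) R, ENNReal.ofReal (C₁ * r^(1/α₁+1/α₂-2)))
          + ∫⁻ r in Set.Ioi R, ENNReal.ofReal (C₂ * r^(1/α₁-1/α₂-2)) := by
          rw [lintegral_indicator measurableSet_Ioc, lintegral_indicator measurableSet_Ioi]
      _ = ENNReal.ofReal (C₁ * ((R^s1 - (a/2)^s1)/s1)) + ENNReal.ofReal (C₂ * (R^(-s2)/s2)) := by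
          rw [conv1, conv2, val1, val2]
      _ ≤ ENNReal.ofReal (24*π^2*N*(1+X)/s1) + ENNReal.ofReal (24*π^2*N*(1+X)/s2) :=
          add_le_add (ENNReal.ofReal_le_ofReal hval1) (ENNReal.ofReal_le_ofReal hval2)
      _ = ENNReal.ofReal (24*π^2*N*(1+X)/s1 + 24*π^2*N*(1+X)/s2) :=
          (ENNReal.ofReal_add (by positivity) (by positivity)).symm
      _ = ENNReal.ofReal (24*π^2*K₀*N*(1+X)) := by rw [hsum]
  have hΛ1 : Λ Delta1 ≤ 1 := prob_le_one
  have hfinal : N⁻¹ * (24*π^2*K₀*N*(1+X))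
      ≤ (24*π^2*K₀+1) * ((n₂:ℝ)^(2*H₂-1) * |θ₂|^(1-2*H₂) + 1) := by
    have hXY : X = (n₂:ℝ)^(2*H₂-1) * |θ₂|^(1-2*H₂) := by
      rw [hXdef, hbdef, show -(2*H₂-1) = 1-2*H₂ by ring,
        Real.div_rpow (abs_nonneg θ₂) (Nat.cast_nonneg n₂), div_eq_mul_inv,
        ← Real.rpow_neg (Nat.cast_nonneg n₂), show -(1-2*H₂) = 2*H₂-1 by ring, mul_comm]
    have hNinv : N⁻¹ * (24*π^2*K₀*N*(1+X)) = 24*π^2*K₀*(1+X) := by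
      field_simp
    rw [hNinv, ← hXY]
    linarith [hX0]
  refine le_trans (mul_le_mul_right (setLIntegral_mono measurable_const key) _) ?_
  rw [setLIntegral_const]
  refine le_trans (mul_le_mul_right (mul_le_mul_right hΛ1 _) _) ?_
  rw [mul_one, ← ENNReal.ofReal_mul (by positivity)]
  exact ENNReal.ofReal_le_ofReal hfinal
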